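/- arXiv:1305.4893 — 2 statements merged into one kernel-verified Lean document; each statement's English description precedes it below -/
import Mathlib

section
/- Let A and B be m×n real matrices with equal rank, and let A† and B† denote their Moore–Penrose pseudo-inverses. Then ‖A† − B†‖ ≤ ((1+√5)/2)·‖A†‖·‖B†‖·‖A − B‖, where ‖·‖ is the operator (spectral) norm. -/
open Matrix
noncomputable def opNorm {m n : ℕ} (M : Matrix (Fin m) (Fin n) ℝ) : ℝ :=
  ‖LinearMap.toContinuousLinearMap (Matrix.toEuclideanLin M)‖

def IsMoorePenrose {m n : ℕ} (A : Matrix (Fin m) (Fin n) ℝ)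
    (Ad : Matrix (Fin n) (Fin m) ℝ) : Prop :=
  A * Ad * A = A ∧ Ad * A * Ad = Ad ∧ (A * Ad)ᵀ = A * Ad ∧ (Ad * A)ᵀ = Ad * A

/-!
Write `P = AA'`, `Q = BB'` and `R = A'A` for the orthogonal projections onto `range A`,
`range B` and `range A'`, and `κ = ‖A'‖ ‖B'‖ ‖A - B‖`; by symmetry `‖B'‖ ≤ ‖A'‖`.
For a vector `x` put `u = Qx`, `v = (1 - Q)x`. Then
`R(A' - B')x = A'(1 - Q)v + A'(B - A)B'u` and `(1 - R)(A' - B')x = -(1 - R)B'u`,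
and all three operators have norm at most `κ`. The delicate one is `A'(1 - Q) = A'P(1 - Q)`:
`‖P(1 - Q)‖ = ‖(1 - Q)P‖`, which equals `‖(1 - P)Q‖ = ‖(1 - P)(B - A)B'‖` because `P` and `Q`
have the same rank. Pythagoras for `R` and for `Q` then gives
`‖(A' - B')x‖² ≤ κ²((a + b)² + a²) ≤ φ²κ²(a² + b²) = φ²κ²‖x‖²` with `a = ‖u‖`, `b = ‖v‖`.
-/

open Module Real
open scoped InnerProductSpace goldenRatio

theorem Real.add_sq_add_sq_le_goldenRatio_sq_mul (a b : ℝ) :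
    (a + b) ^ 2 + a ^ 2 ≤ φ ^ 2 * (a ^ 2 + b ^ 2) := by
  have key : φ * (φ ^ 2 * (a ^ 2 + b ^ 2) - ((a + b) ^ 2 + a ^ 2)) = (a - φ * b) ^ 2 := by
    linear_combination ((φ + 1) * a ^ 2 + φ * b ^ 2) * goldenRatio_sq
  nlinarith [sq_nonneg (a - φ * b), goldenRatio_pos]

theorem IsSelfAdjoint.norm_mul_comm {R : Type*} [NonUnitalNormedRing R] [StarRing R]
    [NormedStarGroup R] {a b : R} (ha : IsSelfAdjoint a) (hb : IsSelfAdjoint b) :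
    ‖a * b‖ = ‖b * a‖ := by
  rw [← norm_star, star_mul, ha.star_eq, hb.star_eq]

namespace Submodule

variable {𝕜 E : Type*} [RCLike 𝕜] [NormedAddCommGroup E] [InnerProductSpace 𝕜 E]

theorem norm_starProjection_orthogonal_le_iff (U : Submodule 𝕜 E) [U.HasOrthogonalProjection]
    {t : ℝ} (ht : 0 ≤ t) (x : E) :
    ‖Uᗮ.starProjection x‖ ≤ t * ‖x‖ ↔ (1 - t ^ 2) * ‖x‖ ^ 2 ≤ ‖U.starProjection x‖ ^ 2 := by
  rw [← sq_le_sq₀ (norm_nonneg _) (by positivity), mul_pow,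
    U.norm_sq_eq_add_norm_sq_starProjection x]
  constructor <;> intro h <;> linarith

theorem mul_norm_sq_le_norm_starProjection_sq_of_finrank_eq {U V : Submodule 𝕜 E}
    [FiniteDimensional 𝕜 U] [FiniteDimensional 𝕜 V] (hUV : finrank 𝕜 U = finrank 𝕜 V)
    {c : ℝ} (hc : 0 < c) (hV : ∀ y ∈ V, c * ‖y‖ ^ 2 ≤ ‖U.starProjection y‖ ^ 2)
    {x : E} (hx : x ∈ U) : c * ‖x‖ ^ 2 ≤ ‖V.starProjection x‖ ^ 2 := by
  -- `hV` makes `P_U` injective on `V`, so by equality of dimensions `x = P_U y` with `y ∈ V`.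
  set f : V →ₗ[𝕜] U := (U.orthogonalProjectionOnto ∘L V.subtypeL).toLinearMap
  have hf : Function.Injective f := by
    refine (injective_iff_map_eq_zero f).mpr fun y hy => ?_
    have hy' : U.starProjection y = 0 := congrArg Subtype.val hy
    have h0 : c * ‖(y : E)‖ ^ 2 = 0 :=
      le_antisymm (by simpa [hy'] using hV y y.2) (by positivity)
    simpa [hc.ne'] using h0
  obtain ⟨y, hy⟩ :=
    (LinearMap.injective_iff_surjective_of_finrank_eq_finrank hUV.symm).mp hf ⟨x, hx⟩
  have hxy : U.starProjection y = x := congrArg Subtype.val hy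
  have hx_sq : ‖x‖ ^ 2 ≤ ‖V.starProjection x‖ * ‖(y : E)‖ := by
    have h1 := U.re_inner_starProjection_eq_normSq y
    rw [coe_norm, ← starProjection_apply, hxy] at h1
    calc ‖x‖ ^ 2 = RCLike.re ⟪x, (y : E)⟫_𝕜 := h1.symm
      _ = RCLike.re ⟪V.starProjection x, (y : E)⟫_𝕜 := by
        rw [inner_starProjection_left_eq_right, starProjection_eq_self_iff.mpr y.2]
      _ ≤ ‖V.starProjection x‖ * ‖(y : E)‖ := re_inner_le_norm _ _
  have hy_sq : c * ‖(y : E)‖ ^ 2 ≤ ‖x‖ ^ 2 := hxy ▸ hV y y.2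
  rcases (norm_nonneg x).eq_or_lt with h0 | hpos
  · simp [← h0]
  refine le_of_mul_le_mul_right ?_ (pow_pos hpos 2)
  calc c * ‖x‖ ^ 2 * ‖x‖ ^ 2 ≤ c * (‖V.starProjection x‖ * ‖(y : E)‖) ^ 2 := by
        rw [mul_assoc, ← sq]
        gcongr
    _ = ‖V.starProjection x‖ ^ 2 * (c * ‖(y : E)‖ ^ 2) := by ring
    _ ≤ ‖V.starProjection x‖ ^ 2 * ‖x‖ ^ 2 := by gcongr

theorem norm_starProjection_orthogonal_mul_starProjection_le_of_finrank_eq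
    {U V : Submodule 𝕜 E} [FiniteDimensional 𝕜 U] [FiniteDimensional 𝕜 V]
    (hUV : finrank 𝕜 U = finrank 𝕜 V) :
    ‖Vᗮ.starProjection * U.starProjection‖ ≤ ‖Uᗮ.starProjection * V.starProjection‖ := by
  set t := ‖Uᗮ.starProjection * V.starProjection‖
  have ht : 0 ≤ t := norm_nonneg _
  by_cases ht1 : 1 ≤ t
  · calc ‖Vᗮ.starProjection * U.starProjection‖
        ≤ ‖Vᗮ.starProjection‖ * ‖U.starProjection‖ := norm_mul_le _ _
      _ ≤ 1 * 1 := by gcongr <;> exact starProjection_norm_le _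
      _ ≤ t := by rwa [one_mul]
  have hc : 0 < 1 - t ^ 2 := by nlinarith
  have hV : ∀ y ∈ V, (1 - t ^ 2) * ‖y‖ ^ 2 ≤ ‖U.starProjection y‖ ^ 2 := fun y hy => by
    refine (U.norm_starProjection_orthogonal_le_iff ht y).mp ?_
    simpa [starProjection_eq_self_iff.mpr hy] using
      (Uᗮ.starProjection * V.starProjection).le_opNorm y
  refine ContinuousLinearMap.opNorm_le_bound _ ht fun z => ?_
  have hU : (1 - t ^ 2) * ‖U.starProjection z‖ ^ 2 ≤ ‖V.starProjection (U.starProjection z)‖ ^ 2 :=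
    mul_norm_sq_le_norm_starProjection_sq_of_finrank_eq hUV hc hV (starProjection_apply_mem U z)
  calc ‖Vᗮ.starProjection (U.starProjection z)‖ ≤ t * ‖U.starProjection z‖ :=
        (V.norm_starProjection_orthogonal_le_iff ht _).mpr hU
    _ ≤ t * ‖z‖ := by gcongr; exact norm_starProjection_apply_le U z

end Submodule

section StarProjection

variable {𝕜 E : Type*} [RCLike 𝕜] [NormedAddCommGroup E] [InnerProductSpace 𝕜 E]
  [CompleteSpace E] {p q : E →L[𝕜] E}

theorem IsStarProjection.norm_sq_eq_add_norm_sq (hp : IsStarProjection p) (x : E) :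
    ‖x‖ ^ 2 = ‖p x‖ ^ 2 + ‖(1 - p) x‖ ^ 2 := by
  obtain ⟨K, _, rfl⟩ := isStarProjection_iff_eq_starProjection.mp hp
  rw [← K.starProjection_orthogonal']
  exact K.norm_sq_eq_add_norm_sq_starProjection x

theorem IsStarProjection.norm_one_sub_mul_le_of_finrank_range_eq [FiniteDimensional 𝕜 E]
    (hp : IsStarProjection p) (hq : IsStarProjection q)
    (h : finrank 𝕜 p.range = finrank 𝕜 q.range) : ‖(1 - q) * p‖ ≤ ‖(1 - p) * q‖ := by
  obtain ⟨U, _, rfl⟩ := isStarProjection_iff_eq_starProjection.mp hp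
  obtain ⟨V, _, rfl⟩ := isStarProjection_iff_eq_starProjection.mp hq
  rw [Submodule.range_starProjection, Submodule.range_starProjection] at h
  rw [← U.starProjection_orthogonal', ← V.starProjection_orthogonal']
  exact Submodule.norm_starProjection_orthogonal_mul_starProjection_le_of_finrank_eq h

end StarProjection

namespace ContinuousLinearMap

variable {𝕜 E F : Type*} [RCLike 𝕜]
  [NormedAddCommGroup E] [InnerProductSpace 𝕜 E] [CompleteSpace E]
  [NormedAddCommGroup F] [InnerProductSpace 𝕜 F] [CompleteSpace F]

structure IsMoorePenroseInverse (A : E →L[𝕜] F) (A' : F →L[𝕜] E) : Prop where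
  comp_comp_self : A ∘L A' ∘L A = A
  comp_comp_self' : A' ∘L A ∘L A' = A'
  isSelfAdjoint_comp : IsSelfAdjoint (A ∘L A')
  isSelfAdjoint_comp' : IsSelfAdjoint (A' ∘L A)

namespace IsMoorePenroseInverse

variable {A B : E →L[𝕜] F} {A' B' : F →L[𝕜] E}

theorem symm (hA : IsMoorePenroseInverse A A') : IsMoorePenroseInverse A' A :=
  ⟨hA.comp_comp_self', hA.comp_comp_self, hA.isSelfAdjoint_comp', hA.isSelfAdjoint_comp⟩

theorem apply_apply_apply (hA : IsMoorePenroseInverse A A') (x : E) : A (A' (A x)) = A x :=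
  DFunLike.congr_fun hA.comp_comp_self x

theorem isStarProjection (hA : IsMoorePenroseInverse A A') : IsStarProjection (A ∘L A') :=
  ⟨congrArg (· ∘L A') hA.comp_comp_self, hA.isSelfAdjoint_comp⟩

theorem range_comp (hA : IsMoorePenroseInverse A A') : (A ∘L A').range = A.range := by
  refine le_antisymm (by rw [toLinearMap_comp]; exact LinearMap.range_comp_le_range _ _) ?_
  calc A.range = ((A ∘L A') ∘L A).range := by rw [comp_assoc, hA.comp_comp_self]
    _ ≤ (A ∘L A').range := by rw [toLinearMap_comp]; exact LinearMap.range_comp_le_range _ _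

theorem norm_one_sub_comp_mul_comp_le (hA : IsMoorePenroseInverse A A') :
    ‖(1 - A ∘L A') * (B ∘L B')‖ ≤ ‖A - B‖ * ‖B'‖ := by
  have h : (1 - A ∘L A') * (B ∘L B') = (1 - A ∘L A') ∘L (B - A) ∘L B' := by
    ext x
    simp [hA.apply_apply_apply]
  calc ‖(1 - A ∘L A') * (B ∘L B')‖ ≤ ‖1 - A ∘L A'‖ * (‖B - A‖ * ‖B'‖) := by
        rw [h]
        exact (opNorm_comp_le _ _).trans (by gcongr; exact opNorm_comp_le _ _)
    _ ≤ 1 * (‖A - B‖ * ‖B'‖) := by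
        rw [norm_sub_rev B]
        gcongr
        exact hA.isStarProjection.one_sub.norm_le
    _ = ‖A - B‖ * ‖B'‖ := one_mul _

theorem norm_comp_mul_one_sub_comp_le (hA : IsMoorePenroseInverse A A') :
    ‖(B' ∘L B) * (1 - A' ∘L A)‖ ≤ ‖B'‖ * ‖A - B‖ := by
  have h : (B' ∘L B) * (1 - A' ∘L A) = B' ∘L (B - A) ∘L (1 - A' ∘L A) := by
    ext x
    simp [hA.apply_apply_apply]
  calc ‖(B' ∘L B) * (1 - A' ∘L A)‖ ≤ ‖B'‖ * (‖B - A‖ * ‖1 - A' ∘L A‖) := by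
        rw [h]
        exact (opNorm_comp_le _ _).trans (by gcongr; exact opNorm_comp_le _ _)
    _ ≤ ‖B'‖ * (‖A - B‖ * 1) := by
        rw [norm_sub_rev B]
        gcongr
        exact hA.symm.isStarProjection.one_sub.norm_le
    _ = ‖B'‖ * ‖A - B‖ := by rw [mul_one]

theorem norm_comp_one_sub_comp_le [FiniteDimensional 𝕜 F] (hA : IsMoorePenroseInverse A A')
    (hB : IsMoorePenroseInverse B B') (hrank : finrank 𝕜 A.range = finrank 𝕜 B.range) :
    ‖A' ∘L (1 - B ∘L B')‖ ≤ ‖A'‖ * (‖A - B‖ * ‖B'‖) := by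
  have hP := hA.isStarProjection
  have hQ := hB.isStarProjection
  have h : A' ∘L (1 - B ∘L B') = A' ∘L ((A ∘L A') * (1 - B ∘L B')) := by
    ext x
    simp [hA.symm.apply_apply_apply]
  calc ‖A' ∘L (1 - B ∘L B')‖ ≤ ‖A'‖ * ‖(A ∘L A') * (1 - B ∘L B')‖ := by
        rw [h]; exact opNorm_comp_le _ _
    _ = ‖A'‖ * ‖(1 - B ∘L B') * (A ∘L A')‖ := by
        rw [hP.isSelfAdjoint.norm_mul_comm hQ.one_sub.isSelfAdjoint]
    _ ≤ ‖A'‖ * ‖(1 - A ∘L A') * (B ∘L B')‖ := by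
        gcongr
        exact hP.norm_one_sub_mul_le_of_finrank_range_eq hQ
          (by rw [hA.range_comp, hB.range_comp, hrank])
    _ ≤ ‖A'‖ * (‖A - B‖ * ‖B'‖) := by
        gcongr
        exact hA.norm_one_sub_comp_mul_comp_le

theorem norm_one_sub_comp_comp_le (hA : IsMoorePenroseInverse A A')
    (hB : IsMoorePenroseInverse B B') :
    ‖(1 - A' ∘L A) ∘L B'‖ ≤ ‖B'‖ * ‖A - B‖ * ‖B'‖ := by
  have hR := hA.symm.isStarProjection
  have hS := hB.symm.isStarProjection
  have h : (1 - A' ∘L A) ∘L B' = ((1 - A' ∘L A) * (B' ∘L B)) ∘L B' := by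
    ext x
    simp [hB.symm.apply_apply_apply]
  calc ‖(1 - A' ∘L A) ∘L B'‖ ≤ ‖(1 - A' ∘L A) * (B' ∘L B)‖ * ‖B'‖ := by
        rw [h]; exact opNorm_comp_le _ _
    _ = ‖(B' ∘L B) * (1 - A' ∘L A)‖ * ‖B'‖ := by
        rw [hR.one_sub.isSelfAdjoint.norm_mul_comm hS.isSelfAdjoint]
    _ ≤ ‖B'‖ * ‖A - B‖ * ‖B'‖ := by
        gcongr
        exact hA.norm_comp_mul_one_sub_comp_le

theorem norm_sub_le_of_norm_le [FiniteDimensional 𝕜 F] (hA : IsMoorePenroseInverse A A')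
    (hB : IsMoorePenroseInverse B B') (hrank : finrank 𝕜 A.range = finrank 𝕜 B.range)
    (hle : ‖B'‖ ≤ ‖A'‖) : ‖A' - B'‖ ≤ φ * (‖A'‖ * ‖B'‖ * ‖A - B‖) := by
  set κ := ‖A'‖ * ‖B'‖ * ‖A - B‖
  set Q := B ∘L B'
  set R := A' ∘L A
  have h1 : ‖A' ∘L (1 - Q)‖ ≤ κ :=
    (hA.norm_comp_one_sub_comp_le hB hrank).trans_eq (by ring)
  have h2 : ‖(1 - R) ∘L B'‖ ≤ κ :=
    (hA.norm_one_sub_comp_comp_le hB).trans (by simp only [κ]; rw [mul_right_comm]; gcongr)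
  have h3 : ‖A' ∘L (B - A) ∘L B'‖ ≤ κ :=
    calc ‖A' ∘L (B - A) ∘L B'‖ ≤ ‖A'‖ * (‖B - A‖ * ‖B'‖) :=
          (opNorm_comp_le _ _).trans (by gcongr; exact opNorm_comp_le _ _)
      _ = κ := by rw [norm_sub_rev]; ring
  refine opNorm_le_bound _ (by positivity) fun x => ?_
  set y := (A' - B') x
  have hRy : ‖R y‖ ≤ κ * (‖Q x‖ + ‖(1 - Q) x‖) := by
    have hR : R y = A' ((1 - Q) ((1 - Q) x)) + A' ((B - A) (B' (Q x))) := by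
      simp [y, Q, R, hA.symm.apply_apply_apply, hB.symm.apply_apply_apply]
    rw [hR]
    refine (norm_add_le _ _).trans ?_
    have hu := (A' ∘L (1 - Q)).le_of_opNorm_le h1 ((1 - Q) x)
    have hv := (A' ∘L (B - A) ∘L B').le_of_opNorm_le h3 (Q x)
    simp only [comp_apply] at hu hv
    linarith
  have hRy' : ‖(1 - R) y‖ ≤ κ * ‖Q x‖ := by
    have hR' : (1 - R) y = -((1 - R) (B' (Q x))) := by
      simp [y, Q, R, hA.symm.apply_apply_apply, hB.symm.apply_apply_apply]
    rw [hR', norm_neg]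
    exact ((1 - R) ∘L B').le_of_opNorm_le h2 (Q x)
  rw [← sq_le_sq₀ (norm_nonneg _) (by positivity)]
  calc ‖y‖ ^ 2 = ‖R y‖ ^ 2 + ‖(1 - R) y‖ ^ 2 := hA.symm.isStarProjection.norm_sq_eq_add_norm_sq y
    _ ≤ (κ * (‖Q x‖ + ‖(1 - Q) x‖)) ^ 2 + (κ * ‖Q x‖) ^ 2 := by gcongr
    _ = κ ^ 2 * ((‖Q x‖ + ‖(1 - Q) x‖) ^ 2 + ‖Q x‖ ^ 2) := by ring
    _ ≤ κ ^ 2 * (φ ^ 2 * (‖Q x‖ ^ 2 + ‖(1 - Q) x‖ ^ 2)) := by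
        gcongr
        exact add_sq_add_sq_le_goldenRatio_sq_mul _ _
    _ = (φ * κ * ‖x‖) ^ 2 := by
        rw [mul_pow (φ * κ), hB.isStarProjection.norm_sq_eq_add_norm_sq x]
        ring

theorem norm_sub_le [FiniteDimensional 𝕜 F] (hA : IsMoorePenroseInverse A A')
    (hB : IsMoorePenroseInverse B B') (hrank : finrank 𝕜 A.range = finrank 𝕜 B.range) :
    ‖A' - B'‖ ≤ φ * ‖A'‖ * ‖B'‖ * ‖A - B‖ := by
  rcases le_total ‖B'‖ ‖A'‖ with hle | hle
  · simpa only [mul_assoc] using hA.norm_sub_le_of_norm_le hB hrank hle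
  · calc ‖A' - B'‖ = ‖B' - A'‖ := norm_sub_rev _ _
      _ ≤ φ * (‖B'‖ * ‖A'‖ * ‖B - A‖) := hB.norm_sub_le_of_norm_le hA hrank.symm hle
      _ = φ * ‖A'‖ * ‖B'‖ * ‖A - B‖ := by rw [norm_sub_rev]; ring

end IsMoorePenroseInverse
end ContinuousLinearMap

namespace Matrix

variable {𝕜 : Type*} [RCLike 𝕜] {l m n : Type*} [Fintype l] [Fintype m] [Fintype n]
  [DecidableEq n]

/-- The rectangular analogue of `Matrix.toEuclideanCLM`; `opNorm M` is `‖toEuclideanL M‖`. -/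
noncomputable def toEuclideanL :
    Matrix m n 𝕜 ≃ₗ[𝕜] (EuclideanSpace 𝕜 n →L[𝕜] EuclideanSpace 𝕜 m) :=
  toEuclideanLin.trans LinearMap.toContinuousLinearMap

theorem toEuclideanL_mul [DecidableEq m] (M : Matrix l m 𝕜) (N : Matrix m n 𝕜) :
    toEuclideanL (M * N) = toEuclideanL M ∘L toEuclideanL N := by
  ext x
  simp [toEuclideanL]

theorem toEuclideanL_conjTranspose [DecidableEq m] (M : Matrix m n 𝕜) :
    toEuclideanL Mᴴ = (toEuclideanL M).adjoint := by
  rw [toEuclideanL, LinearEquiv.trans_apply, toEuclideanLin_conjTranspose_eq_adjoint,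
    LinearMap.adjoint_toContinuousLinearMap]
  rfl

theorem finrank_range_toEuclideanL (M : Matrix m n 𝕜) :
    finrank 𝕜 (toEuclideanL M).range = M.rank := by
  rw [M.rank_eq_finrank_range_toLin (EuclideanSpace.basisFun m 𝕜).toBasis
    (EuclideanSpace.basisFun n 𝕜).toBasis]
  rfl

theorem _root_.IsSelfAdjoint.toEuclideanL {P : Matrix n n 𝕜} (hP : IsSelfAdjoint P) :
    IsSelfAdjoint (toEuclideanL P) := by
  rw [IsSelfAdjoint, ContinuousLinearMap.star_eq_adjoint, ← toEuclideanL_conjTranspose,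
    ← star_eq_conjTranspose, hP.star_eq]

end Matrix

theorem IsMoorePenrose.isMoorePenroseInverse {m n : ℕ} {M : Matrix (Fin m) (Fin n) ℝ}
    {Md : Matrix (Fin n) (Fin m) ℝ} (h : IsMoorePenrose M Md) :
    (toEuclideanL M).IsMoorePenroseInverse (toEuclideanL Md) := by
  obtain ⟨h1, h2, h3, h4⟩ := h
  refine ⟨?_, ?_, ?_, ?_⟩
  · rw [← toEuclideanL_mul, ← toEuclideanL_mul, ← Matrix.mul_assoc, h1]
  · rw [← toEuclideanL_mul, ← toEuclideanL_mul, ← Matrix.mul_assoc, h2]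
  · rw [← toEuclideanL_mul]
    exact IsSelfAdjoint.toEuclideanL ((conjTranspose_eq_transpose_of_trivial _).trans h3)
  · rw [← toEuclideanL_mul]
    exact IsSelfAdjoint.toEuclideanL ((conjTranspose_eq_transpose_of_trivial _).trans h4)

theorem stmt0 {m n : ℕ} (A B : Matrix (Fin m) (Fin n) ℝ)
    (Ad Bd : Matrix (Fin n) (Fin m) ℝ)
    (hA : IsMoorePenrose A Ad) (hB : IsMoorePenrose B Bd)
    (hrank : A.rank = B.rank) :
    opNorm (Ad - Bd) ≤ (1 + Real.sqrt 5) / 2 * opNorm Ad * opNorm Bd * opNorm (A - B) := by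
  have h := (IsMoorePenrose.isMoorePenroseInverse hA).norm_sub_le
    (IsMoorePenrose.isMoorePenroseInverse hB)
    (by rw [finrank_range_toEuclideanL, finrank_range_toEuclideanL, hrank])
  rw [← map_sub, ← map_sub] at h
  exact h
end

section
/- Let Z, Z̃ ∈ ℝ^{n×d} have full column rank d. Then there exists an orthogonal matrix W ∈ ℝ^{d×d} such that ‖ZWᵀ − Z̃‖ ≤ ‖ZZᵀ − Z̃Z̃ᵀ‖ · (√‖ZZᵀ‖ + √‖Z̃Z̃ᵀ‖) / λ_d(Z̃Z̃ᵀ), where λ_d(Z̃Z̃ᵀ) is the d-th largest eigenvalue of Z̃Z̃ᵀ and ‖·‖ the spectral norm. -/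
/-!
With `T = Z̃ᵀZ̃` and `E = ZZᵀ - Z̃Z̃ᵀ`, take the polar decomposition `ZᵀZ̃ = U S` with `U`
orthogonal and `S ⪰ 0`, `S² = Z̃ᵀZZᵀZ̃`, and put `W = Uᵀ`. From `ZUS = ZZᵀZ̃` we get
`(ZU - Z̃) T = E Z̃ - ZU (S - T)`, and since `T ⪰ λ_d`,
`λ_d ‖ZU - Z̃‖ ≤ ‖E‖ ‖Z̃‖ + ‖Z‖ ‖S - T‖`, where `‖Z‖ = √‖ZZᵀ‖`.

The remaining bound `‖S - T‖ ≤ ‖E‖` comes from `S² - T² = Z̃ᵀ E Z̃`: for a unit eigenvector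
`(S - T) x = μ x` and `a = ⟨x, T x⟩ = ‖Z̃ x‖²` we have `⟨x, S x⟩ = a + μ ≥ 0` and
`μ (2a + μ) = ⟨Z̃ x, E Z̃ x⟩`, of absolute value at most `‖E‖ a`; hence `|μ| ≤ ‖E‖`.
-/

open Matrix

open scoped Matrix.Norms.L2Operator MatrixOrder

theorem opNorm_eq_l2_opNorm {m n : ℕ} (M : Matrix (Fin m) (Fin n) ℝ) : opNorm M = ‖M‖ := rfl

theorem LinearMap.exists_linearIsometryEquiv_comp_eq {𝕜 E V : Type*} [RCLike 𝕜]
    [AddCommGroup E] [Module 𝕜 E] [NormedAddCommGroup V] [InnerProductSpace 𝕜 V]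
    [FiniteDimensional 𝕜 V] (s k : E →ₗ[𝕜] V) (h : ∀ x, ‖s x‖ = ‖k x‖) :
    ∃ u : V ≃ₗᵢ[𝕜] V, ∀ x, u (s x) = k x := by
  have hker : LinearMap.ker s ≤ LinearMap.ker k := fun x hx => by
    rw [LinearMap.mem_ker, ← norm_eq_zero, ← h, hx, norm_zero]
  set L : LinearMap.range s →ₗ[𝕜] V :=
    (LinearMap.ker s).liftQ k hker ∘ₗ s.quotKerEquivRange.symm.toLinearMap
  have hL : ∀ x, L ⟨s x, LinearMap.mem_range_self s x⟩ = k x := fun x => by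
    simp [L, LinearMap.quotKerEquivRange_symm_apply_image]
  have hL_norm : ∀ y, ‖L y‖ = ‖y‖ := by
    rintro ⟨_, x, rfl⟩
    rw [hL, ← h]
    rfl
  refine ⟨(LinearIsometry.extend ⟨L, hL_norm⟩).toLinearIsometryEquiv rfl, fun x => ?_⟩
  exact (LinearIsometry.extend_apply _ ⟨s x, LinearMap.mem_range_self s x⟩).trans (hL x)

namespace Matrix

theorem mulVec_injective_of_rank_eq_card {K m n : Type*} [Field K] [Fintype n]
    {A : Matrix m n K} (h : A.rank = Fintype.card n) : Function.Injective A.mulVec := by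
  rw [mulVec_injective_iff, linearIndependent_iff_card_eq_finrank_span, ← h,
    rank_eq_finrank_span_cols]
  rfl

section RCLike

variable {𝕜 : Type*} [RCLike 𝕜] {m n : Type*} [Fintype m] [Fintype n] [DecidableEq n]

theorem l2_opNorm_eq_sqrt_mul_conjTranspose [DecidableEq m] (A : Matrix m n 𝕜) :
    ‖A‖ = √‖A * Aᴴ‖ := by
  have h := l2_opNorm_conjTranspose_mul_self Aᴴ
  rw [conjTranspose_conjTranspose, l2_opNorm_conjTranspose] at h
  rw [h, Real.sqrt_mul_self (norm_nonneg _)]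

theorem l2_opNorm_mul_of_mem_unitaryGroup (A : Matrix m n 𝕜) {U : Matrix n n 𝕜}
    (hU : U ∈ unitaryGroup n 𝕜) : ‖A * U‖ = ‖A‖ := by
  rw [← mul_self_inj (norm_nonneg _) (norm_nonneg _), ← l2_opNorm_conjTranspose_mul_self,
    ← l2_opNorm_conjTranspose_mul_self, conjTranspose_mul, Matrix.mul_assoc,
    ← Matrix.mul_assoc Aᴴ, ← star_eq_conjTranspose U,
    CStarRing.norm_mem_unitary_mul _ (Unitary.star_mem hU), CStarRing.norm_mul_mem_unitary _ hU]

theorem exists_mem_unitaryGroup_mul_eq {S K : Matrix n n 𝕜} (h : Sᴴ * S = Kᴴ * K) :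
    ∃ U ∈ unitaryGroup n 𝕜, U * S = K := by
  set φ := toEuclideanCLM (n := n) (𝕜 := 𝕜)
  have hnorm : ∀ x, ‖φ S x‖ = ‖φ K x‖ := fun x => by
    rw [← sq_eq_sq₀ (norm_nonneg _) (norm_nonneg _),
      ContinuousLinearMap.apply_norm_sq_eq_inner_adjoint_left,
      ContinuousLinearMap.apply_norm_sq_eq_inner_adjoint_left,
      ← ContinuousLinearMap.star_eq_adjoint, ← ContinuousLinearMap.star_eq_adjoint,
      ← ContinuousLinearMap.mul_def, ← ContinuousLinearMap.mul_def, ← map_star, ← map_star,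
      ← map_mul, ← map_mul, star_eq_conjTranspose, star_eq_conjTranspose, h]
  obtain ⟨u, hu⟩ := LinearMap.exists_linearIsometryEquiv_comp_eq (φ S).toLinearMap
    (φ K).toLinearMap hnorm
  have hcomp : (u : EuclideanSpace 𝕜 n →L[𝕜] EuclideanSpace 𝕜 n) * φ S = φ K := by
    ext1 x
    exact hu x
  refine ⟨φ.symm (Unitary.linearIsometryEquiv.symm u),
    Unitary.map_mem φ.symm (SetLike.coe_mem _), ?_⟩
  rw [← φ.symm_apply_apply S, ← map_mul, Unitary.coe_symm_linearIsometryEquiv_apply, hcomp,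
    φ.symm_apply_apply]

end RCLike

section Real

variable {m n : Type*} [Fintype m] [Fintype n] [DecidableEq n]

omit [DecidableEq n] in
theorem IsHermitian.dotProduct_mulVec_comm {A : Matrix n n ℝ} (hA : A.IsHermitian)
    (x y : n → ℝ) : x ⬝ᵥ A *ᵥ y = A *ᵥ x ⬝ᵥ y := by
  rw [dotProduct_mulVec, ← mulVec_transpose, ← conjTranspose_eq_transpose_of_trivial, hA.eq]

theorem abs_dotProduct_mulVec_le (A : Matrix n n ℝ) (x : n → ℝ) :
    |x ⬝ᵥ A *ᵥ x| ≤ ‖A‖ * (x ⬝ᵥ x) := by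
  set v : EuclideanSpace ℝ n := WithLp.toLp 2 x
  set a := toEuclideanCLM (n := n) (𝕜 := ℝ) A
  have hxv : x ⬝ᵥ x = ‖v‖ ^ 2 := by
    rw [← real_inner_self_eq_norm_sq, EuclideanSpace.inner_eq_star_dotProduct, star_trivial]
  calc |x ⬝ᵥ A *ᵥ x| = |inner ℝ v (a v)| := by rw [inner_toEuclideanCLM]
    _ ≤ ‖v‖ * ‖a v‖ := abs_real_inner_le_norm _ _
    _ ≤ ‖v‖ * (‖A‖ * ‖v‖) := by gcongr; exact a.le_opNorm v
    _ = ‖A‖ * (x ⬝ᵥ x) := by rw [hxv]; ring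

theorem IsHermitian.l2_opNorm_le_of_abs_eigenvalues_le {A : Matrix n n ℝ} (hA : A.IsHermitian)
    {c : ℝ} (hc : 0 ≤ c) (h : ∀ i, |hA.eigenvalues i| ≤ c) : ‖A‖ ≤ c := by
  have : IsSelfAdjoint A := hA.isSelfAdjoint
  rw [← cfc_id' ℝ A]
  apply norm_cfc_le hc
  rw [hA.spectrum_real_eq_range_eigenvalues]
  rintro _ ⟨i, rfl⟩
  exact h i

theorem IsHermitian.mul_l2_opNorm_le_l2_opNorm_mul {A : Matrix n n ℝ} (hA : A.IsHermitian)
    {c : ℝ} (hc : 0 < c) (h : ∀ i, c ≤ hA.eigenvalues i) (X : Matrix m n ℝ) :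
    c * ‖X‖ ≤ ‖X * A‖ := by
  have : IsSelfAdjoint A := hA.isSelfAdjoint
  have hspec : ∀ x ∈ spectrum ℝ A, c ≤ x := by
    rw [hA.spectrum_real_eq_range_eigenvalues]
    rintro _ ⟨i, rfl⟩
    exact h i
  have hunit : IsUnit A := spectrum.zero_notMem_iff ℝ |>.mp fun h0 => (hspec 0 h0).not_gt hc
  have hinv : ‖Ring.inverse A‖ ≤ c⁻¹ := by
    rw [← cfc_ringInverse_id (R := ℝ) A hunit]
    apply norm_cfc_le (by positivity)
    intro x hx
    rw [Real.norm_eq_abs, abs_inv, abs_of_pos (hc.trans_le (hspec x hx))]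
    exact inv_anti₀ hc (hspec x hx)
  calc c * ‖X‖ = c * ‖X * A * Ring.inverse A‖ := by
        rw [Matrix.mul_assoc, Ring.mul_inverse_cancel _ hunit, Matrix.mul_one]
    _ ≤ c * (‖X * A‖ * c⁻¹) := by gcongr; exact (l2_opNorm_mul _ _).trans (by gcongr)
    _ = ‖X * A‖ := by field_simp

theorem PosSemidef.l2_opNorm_sub_le {S T : Matrix n n ℝ} (hS : S.PosSemidef) (hT : T.PosSemidef)
    {c : ℝ} (hc : 0 ≤ c) (h : ∀ x, |x ⬝ᵥ (S * S - T * T) *ᵥ x| ≤ c * (x ⬝ᵥ T *ᵥ x)) :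
    ‖S - T‖ ≤ c := by
  have hD := hS.1.sub hT.1
  refine hD.l2_opNorm_le_of_abs_eigenvalues_le hc fun i => ?_
  set μ := hD.eigenvalues i
  set x : n → ℝ := ⇑(hD.eigenvectorBasis i)
  have hSx : S *ᵥ x = T *ᵥ x + μ • x := by
    rw [← sub_eq_iff_eq_add', ← sub_mulVec]
    exact hD.mulVec_eigenvectorBasis i
  have hxx : x ⬝ᵥ x = 1 := by
    have := hD.eigenvectorBasis.inner_eq_one i
    rwa [EuclideanSpace.inner_eq_star_dotProduct, star_trivial] at this
  set a := x ⬝ᵥ T *ᵥ x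
  have ha : 0 ≤ a := by simpa using hT.dotProduct_mulVec_nonneg x
  have hs : 0 ≤ a + μ := by
    have := hS.dotProduct_mulVec_nonneg x
    rw [star_trivial, hSx, dotProduct_add, dotProduct_smul, hxx] at this
    simpa using this
  have hquad : x ⬝ᵥ (S * S - T * T) *ᵥ x = μ * (a + μ + a) := by
    rw [sub_mulVec, dotProduct_sub, ← mulVec_mulVec, ← mulVec_mulVec,
      hS.1.dotProduct_mulVec_comm, hT.1.dotProduct_mulVec_comm, hSx]
    simp only [add_dotProduct, dotProduct_add, smul_dotProduct, dotProduct_smul, smul_eq_mul,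
      hxx, dotProduct_comm (T *ᵥ x) x]
    ring
  have key : |μ| * (a + μ + a) ≤ c * (a + μ + a) :=
    calc |μ| * (a + μ + a) = |x ⬝ᵥ (S * S - T * T) *ᵥ x| := by
          rw [hquad, abs_mul, abs_of_nonneg (show 0 ≤ a + μ + a by linarith)]
      _ ≤ c * a := h x
      _ ≤ c * (a + μ + a) := by gcongr; linarith
  rcases (show 0 ≤ a + μ + a by linarith).lt_or_eq with hpos | hzero
  · exact le_of_mul_le_mul_right key hpos
  · have : μ = 0 := by linarith
    simpa [this] using hc

theorem PosSemidef.l2_opNorm_sub_transpose_mul_self_le [DecidableEq m] {S : Matrix n n ℝ}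
    (hS : S.PosSemidef) (B : Matrix m n ℝ) (E : Matrix m m ℝ)
    (h : S * S - Bᵀ * B * (Bᵀ * B) = Bᵀ * E * B) : ‖S - Bᵀ * B‖ ≤ ‖E‖ := by
  have hB : (Bᵀ * B).PosSemidef := by
    simpa [conjTranspose_eq_transpose_of_trivial] using posSemidef_conjTranspose_mul_self B
  refine hS.l2_opNorm_sub_le hB (norm_nonneg E) fun x => ?_
  have hx : x ⬝ᵥ (Bᵀ * B) *ᵥ x = B *ᵥ x ⬝ᵥ B *ᵥ x := by
    rw [← mulVec_mulVec, dotProduct_mulVec, vecMul_transpose, dotProduct_comm]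
  rw [h, hx, ← mulVec_mulVec, ← mulVec_mulVec, dotProduct_mulVec x, vecMul_transpose]
  exact abs_dotProduct_mulVec_le E (B *ᵥ x)

theorem exists_mem_unitaryGroup_mul_l2_opNorm_sub_le [DecidableEq m] (Z Zt : Matrix m n ℝ)
    (hT : (Ztᵀ * Zt).IsHermitian) {c : ℝ} (hc : 0 < c) (hle : ∀ i, c ≤ hT.eigenvalues i) :
    ∃ U ∈ unitaryGroup n ℝ, c * ‖Z * U - Zt‖ ≤
      ‖Z * Zᵀ - Zt * Ztᵀ‖ * (√‖Z * Zᵀ‖ + √‖Zt * Ztᵀ‖) := by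
  set K := Zᵀ * Zt
  set S := CFC.sqrt (Kᵀ * K)
  have hS : S.PosSemidef := nonneg_iff_posSemidef.mp (CFC.sqrt_nonneg _)
  have hSS : S * S = Kᵀ * K := CFC.sqrt_mul_sqrt_self _ <| nonneg_iff_posSemidef.mpr <| by
    simpa [conjTranspose_eq_transpose_of_trivial] using posSemidef_conjTranspose_mul_self K
  obtain ⟨U, hU, hUS⟩ := exists_mem_unitaryGroup_mul_eq (S := S) (K := K) (by
    rw [hS.1.eq, hSS, conjTranspose_eq_transpose_of_trivial])
  refine ⟨U, hU, ?_⟩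
  set E := Z * Zᵀ - Zt * Ztᵀ
  have hSsub : ‖S - Ztᵀ * Zt‖ ≤ ‖E‖ := hS.l2_opNorm_sub_transpose_mul_self_le Zt E (by
    simp only [hSS, K, E, transpose_mul, transpose_transpose, Matrix.mul_sub, Matrix.sub_mul,
      Matrix.mul_assoc])
  have hZUS : Z * U * S = Z * Zᵀ * Zt := by rw [Matrix.mul_assoc, hUS, Matrix.mul_assoc]
  have hid : (Z * U - Zt) * (Ztᵀ * Zt) = E * Zt - Z * U * (S - Ztᵀ * Zt) := by
    rw [Matrix.mul_sub, hZUS]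
    simp only [E, Matrix.sub_mul, Matrix.mul_assoc]
    abel
  calc c * ‖Z * U - Zt‖ ≤ ‖(Z * U - Zt) * (Ztᵀ * Zt)‖ :=
        hT.mul_l2_opNorm_le_l2_opNorm_mul hc hle _
    _ ≤ ‖E‖ * ‖Zt‖ + ‖Z‖ * ‖E‖ := by
      rw [hid, ← l2_opNorm_mul_of_mem_unitaryGroup Z hU]
      exact (norm_sub_le _ _).trans
        (add_le_add (l2_opNorm_mul _ _) ((l2_opNorm_mul _ _).trans (by gcongr)))
    _ = ‖E‖ * (√‖Z * Zᵀ‖ + √‖Zt * Ztᵀ‖) := by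
      rw [l2_opNorm_eq_sqrt_mul_conjTranspose Z, l2_opNorm_eq_sqrt_mul_conjTranspose Zt,
        conjTranspose_eq_transpose_of_trivial, conjTranspose_eq_transpose_of_trivial]
      ring

end Real

end Matrix

theorem stmt9_general {n d : ℕ} (hd : 0 < d)
    (Z Zt : Matrix (Fin n) (Fin d) ℝ)
    (hZt : Zt.rank = d)
    (hHerm : (Ztᵀ * Zt).IsHermitian)
    (lam : ℝ) (hlam : lam = ⨅ i, hHerm.eigenvalues i) :
    ∃ W : Matrix (Fin d) (Fin d) ℝ, Wᵀ * W = 1 ∧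
      opNorm (Z * Wᵀ - Zt) ≤
        opNorm (Z * Zᵀ - Zt * Ztᵀ) *
          (Real.sqrt (opNorm (Z * Zᵀ)) + Real.sqrt (opNorm (Zt * Ztᵀ))) / lam := by
  have : Nonempty (Fin d) := ⟨⟨0, hd⟩⟩
  have hT : (Ztᵀ * Zt).PosDef := by
    simpa [conjTranspose_eq_transpose_of_trivial] using
      PosDef.conjTranspose_mul_self Zt (mulVec_injective_of_rank_eq_card (by simpa using hZt))
  have hlam_le : ∀ i, lam ≤ hHerm.eigenvalues i := hlam ▸ ciInf_le (Finite.bddBelow_range _)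
  have hlam_pos : 0 < lam := by
    obtain ⟨i, hi⟩ := exists_eq_ciInf_of_finite (f := hHerm.eigenvalues)
    exact hlam ▸ hi ▸ hT.eigenvalues_pos i
  obtain ⟨U, hU, hbound⟩ :=
    exists_mem_unitaryGroup_mul_l2_opNorm_sub_le Z Zt hHerm hlam_pos hlam_le
  refine ⟨Uᵀ, by rw [transpose_transpose, ← mem_unitaryGroup_iff.mp hU]; rfl, ?_⟩
  simp only [opNorm_eq_l2_opNorm, transpose_transpose]
  rwa [le_div_iff₀ hlam_pos, mul_comm]

theorem stmt9 {n d : ℕ} (hd : 0 < d)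
    (Z Zt : Matrix (Fin n) (Fin d) ℝ)
    (hZ : Z.rank = d) (hZt : Zt.rank = d)
    (hHerm : (Ztᵀ * Zt).IsHermitian)
    (lam : ℝ) (hlam : lam = ⨅ i, hHerm.eigenvalues i) :
    ∃ W : Matrix (Fin d) (Fin d) ℝ, Wᵀ * W = 1 ∧
      opNorm (Z * Wᵀ - Zt) ≤
        opNorm (Z * Zᵀ - Zt * Ztᵀ) *
          (Real.sqrt (opNorm (Z * Zᵀ)) + Real.sqrt (opNorm (Zt * Ztᵀ))) / lam :=
  stmt9_general hd Z Zt hZt hHerm lam hlam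
end
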